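/- arXiv:2111.10015 — 4 statements merged into one kernel-verified Lean document; each statement's English description precedes it below -/
import Mathlib

section
/- Let A = [a̲, ā], B = [b̲, b̄], and C = [c̲, c̄] be compact intervals (lower endpoint ≤ upper endpoint in each). If A = B ⊕ C (i.e., a̲ = b̲ + c̲ and ā = b̄ + c̄) or B = A ⊖ C (i.e., b̲ = a̲ − c̄ and b̄ = ā − c̲), then c̲ = min(a̲ − b̲, ā − b̄) and c̄ = max(a̲ − b̲, ā − b̄). In particular the gH-difference A ⊖_gH B is the unique interval C satisfying one of these two equations. -/
/-- If compact intervals A = [a₁, a₂], B = [b₁, b₂], C = [c₁, c₂]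
satisfy A = B ⊕ C or B = A ⊖ C, then c₁ = min(a₁ − b₁, a₂ − b₂) and
c₂ = max(a₁ − b₁, a₂ − b₂); i.e. the gH-difference is the unique such C. -/
theorem gH_difference_unique (a₁ a₂ b₁ b₂ c₁ c₂ : ℝ)
    (ha : a₁ ≤ a₂) (hb : b₁ ≤ b₂) (hc : c₁ ≤ c₂)
    (h : (a₁ = b₁ + c₁ ∧ a₂ = b₂ + c₂) ∨ (b₁ = a₁ - c₂ ∧ b₂ = a₂ - c₁)) :
    c₁ = min (a₁ - b₁) (a₂ - b₂) ∧ c₂ = max (a₁ - b₁) (a₂ - b₂) := by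
  rcases h with ⟨h1, h2⟩ | ⟨h1, h2⟩ <;>
    constructor <;> simp only [min_def, max_def]
  all_goals split_ifs <;> linarith
end

section
/- (Theorem 2.1, one-dimensional form) Let 𝒳 ⊆ ℝ be a nonempty open interval and let f̲, f̄ : 𝒳 → ℝ be convex functions with f̲(t) ≤ f̄(t) for all t ∈ 𝒳, both differentiable at a point x ∈ 𝒳. Then for every y ∈ 𝒳: min((y − x)·f̲′(x), (y − x)·f̄′(x)) ≤ min(f̲(y) − f̲(x), f̄(y) − f̄(x)) and max((y − x)·f̲′(x), (y − x)·f̄′(x)) ≤ max(f̲(y) − f̲(x), f̄(y) − f̄(x)). (Equivalently, (y − x) ⊙ F′(x) ⪯ F(y) ⊖_gH F(x), where F(x) = [f̲(x), f̄(x)] and F′(x) = [min(f̲′(x), f̄′(x)), max(f̲′(x), f̄′(x))] is the gH-derivative.) -/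
lemma convex_subgrad {X : Set ℝ} (f : ℝ → ℝ) (hf : ConvexOn ℝ X f)
    {x : ℝ} (hx : x ∈ X) {f' : ℝ} (hd : HasDerivAt f f' x) :
    ∀ y ∈ X, (y - x) * f' ≤ f y - f x := by
  intro y hy
  rcases lt_trichotomy x y with h | h | h
  · have := hf.le_slope_of_hasDerivAt hx hy h hd
    rw [slope_def_field, le_div_iff₀ (by linarith)] at this
    linarith
  · simp [h]
  · have := hf.slope_le_of_hasDerivAt hy hx h hd
    rw [slope_def_field, div_le_iff₀ (by linarith)] at this
    linarith

/-- Theorem 2.1, one-dimensional form: Let 𝒳 ⊆ ℝ be a nonempty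
open interval (a nonempty open convex set), flo, fup : 𝒳 → ℝ convex with
flo ≤ fup, both differentiable at x ∈ 𝒳.  Then for every y ∈ 𝒳,
(y − x) ⊙ F′(x) ⪯ F(y) ⊖_gH F(x), expressed via endpoints. -/
theorem gH_derivative_subgradient_ineq_1d {X : Set ℝ}
    (hne : X.Nonempty) (hopen : IsOpen X) (hconv : Convex ℝ X)
    (flo fup : ℝ → ℝ)
    (hflo : ConvexOn ℝ X flo) (hfup : ConvexOn ℝ X fup)
    (hle : ∀ t ∈ X, flo t ≤ fup t)
    {x : ℝ} (hx : x ∈ X) {flo' fup' : ℝ}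
    (hdlo : HasDerivAt flo flo' x) (hdup : HasDerivAt fup fup' x) :
    ∀ y ∈ X,
      min ((y - x) * flo') ((y - x) * fup') ≤
        min (flo y - flo x) (fup y - fup x) ∧
      max ((y - x) * flo') ((y - x) * fup') ≤
        max (flo y - flo x) (fup y - fup x) := by
  intro y hy
  have h1 := convex_subgrad flo hflo hx hdlo y hy
  have h2 := convex_subgrad fup hfup hx hdup y hy
  constructor
  · exact le_min (min_le_of_left_le h1) (min_le_of_right_le h2)
  · exact max_le (h1.trans (le_max_left _ _)) (h2.trans (le_max_right _ _))
end

section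
/- (Lower-endpoint gradient inequality underlying Theorem 2.1) Let 𝒳 ⊆ ℝⁿ be a nonempty open convex set and let f̲, f̄ : 𝒳 → ℝ be convex functions with f̲ ≤ f̄ on 𝒳, both differentiable at a point x ∈ 𝒳. Then for every y ∈ 𝒳: Σᵢ₌₁ⁿ min((yᵢ − xᵢ)·∂ᵢf̲(x), (yᵢ − xᵢ)·∂ᵢf̄(x)) ≤ min(f̲(y) − f̲(x), f̄(y) − f̄(x)). (This is the lower endpoint of the dominance relation (y − x)ᵀ ⊙ ∇F(x) ⪯ F(y) ⊖_gH F(x) for the convex IVF F = [f̲, f̄].) -/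
/-! Restricted to the segment from `x` to `y`, a convex function lies above its tangent line at `x`,
so `Df(x)(y - x) ≤ f y - f x`. Expanding `y - x` in the standard basis writes the left side as
`∑ᵢ (yᵢ - xᵢ) ∂ᵢf(x)`, and each summand of the `min`-sum is bounded by the corresponding summand for
either endpoint function. -/

theorem map_eq_sum_smul_map_single {ι R M F : Type*} [Fintype ι] [DecidableEq ι] [CommSemiring R]
    [AddCommMonoid M] [Module R M] [FunLike F (ι → R) M] [LinearMapClass F R (ι → R) M]
    (f : F) (v : ι → R) :
    f v = ∑ i, v i • f (Pi.single i 1) := by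
  conv_lhs => rw [pi_eq_sum_univ' v]
  simp only [map_sum, map_smul]

theorem ConvexOn.hasFDerivAt_apply_sub_le {E : Type*} [NormedAddCommGroup E] [NormedSpace ℝ E]
    {s : Set E} {f : E → ℝ} {f' : E →L[ℝ] ℝ} {x y : E}
    (hf : ConvexOn ℝ s f) (hx : x ∈ s) (hy : y ∈ s) (hf' : HasFDerivAt f f' x) :
    f' (y - x) ≤ f y - f x := by
  set γ : ℝ →ᵃ[ℝ] E := AffineMap.lineMap x y
  have hseg : ConvexOn ℝ (γ ⁻¹' s) (f ∘ γ) := hf.comp_affineMap γ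
  have hderiv : HasDerivAt (f ∘ γ) (f' (y - x)) 0 := by
    have hf'0 : HasFDerivAt f f' (γ 0) := by rwa [AffineMap.lineMap_apply_zero]
    exact hf'0.comp_hasDerivAt 0 AffineMap.hasDerivAt_lineMap
  have hslope :=
    hseg.le_slope_of_hasDerivAt (by simpa [γ] using hx) (by simpa [γ] using hy) one_pos hderiv
  simpa [γ, slope_def_field] using hslope

theorem ConvexOn.sum_sub_mul_partial_le {ι : Type*} [Fintype ι] [DecidableEq ι]
    {s : Set (ι → ℝ)} {f : (ι → ℝ) → ℝ} {f' : (ι → ℝ) →L[ℝ] ℝ} {x y : ι → ℝ}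
    (hf : ConvexOn ℝ s f) (hx : x ∈ s) (hy : y ∈ s) (hf' : HasFDerivAt f f' x) :
    ∑ i, (y i - x i) * f' (Pi.single i 1) ≤ f y - f x := by
  have hexpand := map_eq_sum_smul_map_single f' (y - x)
  simp only [Pi.sub_apply, smul_eq_mul] at hexpand
  exact hexpand ▸ hf.hasFDerivAt_apply_sub_le hx hy hf'

theorem gH_gradient_lower_endpoint_ineq_general {n : ℕ} {X : Set (Fin n → ℝ)}
    (flo fup : (Fin n → ℝ) → ℝ)
    (hflo : ConvexOn ℝ X flo) (hfup : ConvexOn ℝ X fup)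
    {x : Fin n → ℝ} (hx : x ∈ X)
    {Dlo Dup : (Fin n → ℝ) →L[ℝ] ℝ}
    (hdlo : HasFDerivAt flo Dlo x) (hdup : HasFDerivAt fup Dup x) :
    ∀ y ∈ X,
      ∑ i : Fin n, min ((y i - x i) * Dlo (Pi.single i 1))
          ((y i - x i) * Dup (Pi.single i 1)) ≤
        min (flo y - flo x) (fup y - fup x) := by
  intro y hy
  exact le_min
    ((Finset.sum_le_sum fun i _ ↦ min_le_left _ _).trans (hflo.sum_sub_mul_partial_le hx hy hdlo))
    ((Finset.sum_le_sum fun i _ ↦ min_le_right _ _).trans (hfup.sum_sub_mul_partial_le hx hy hdup))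

/-- lower-endpoint gradient inequality underlying Theorem 2.1:
For a nonempty open convex 𝒳 ⊆ ℝⁿ, convex flo ≤ fup on 𝒳 both differentiable
at x ∈ 𝒳, and every y ∈ 𝒳,
Σᵢ min((yᵢ − xᵢ)∂ᵢflo(x), (yᵢ − xᵢ)∂ᵢfup(x)) ≤ min(flo y − flo x, fup y − fup x). -/
theorem gH_gradient_lower_endpoint_ineq {n : ℕ} {X : Set (Fin n → ℝ)}
    (hne : X.Nonempty) (hopen : IsOpen X) (hconv : Convex ℝ X)
    (flo fup : (Fin n → ℝ) → ℝ)
    (hflo : ConvexOn ℝ X flo) (hfup : ConvexOn ℝ X fup)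
    (hle : ∀ z ∈ X, flo z ≤ fup z)
    {x : Fin n → ℝ} (hx : x ∈ X)
    {Dlo Dup : (Fin n → ℝ) →L[ℝ] ℝ}
    (hdlo : HasFDerivAt flo Dlo x) (hdup : HasFDerivAt fup Dup x) :
    ∀ y ∈ X,
      ∑ i : Fin n, min ((y i - x i) * Dlo (Pi.single i 1))
          ((y i - x i) * Dup (Pi.single i 1)) ≤
        min (flo y - flo x) (fup y - fup x) :=
  gH_gradient_lower_endpoint_ineq_general flo fup hflo hfup hx hdlo hdup
end

section
/- (Example 3.1, inequality (3.3)) Define f̲, f̄ : [−3, 3] → ℝ by f̲(x) = 3 + |x| and f̄(x) = 7 if |x| ≤ 1, f̄(x) = 5 + 2|x| if 1 ≤ |x| ≤ 3. Let g̲ ≤ ḡ be reals such that for all d ∈ [0, 2]: min(d·g̲, d·ḡ) ≤ min(f̲(d−1) − 4, f̄(d−1) − 7) and max(d·g̲, d·ḡ) ≤ max(f̲(d−1) − 4, f̄(d−1) − 7) (the gH-subgradient inequality d ⊙ G ⪯ F(d−1) ⊖_gH F(−1) with G = [g̲, ḡ]). Then g̲ ≤ −1 and ḡ ≤ 0. 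-/
/-- Lower endpoint function of the IVF of Example 3.1. -/
noncomputable def exFlo (x : ℝ) : ℝ := 3 + |x|

/-- Upper endpoint function of the IVF of Example 3.1. -/
noncomputable def exFup (x : ℝ) : ℝ := if |x| ≤ 1 then 7 else 5 + 2 * |x|

/-- Example 3.1, inequality (3.3): if G = [g₁, g₂] satisfies the
gH-subgradient inequality d ⊙ G ⪯ F(d−1) ⊖_gH F(−1) for all d ∈ [0, 2],
then g₁ ≤ −1 and g₂ ≤ 0. -/
theorem example_subgradient_bound_first (g₁ g₂ : ℝ) (hg : g₁ ≤ g₂)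
    (h : ∀ d ∈ Set.Icc (0 : ℝ) 2,
      min (d * g₁) (d * g₂) ≤ min (exFlo (d - 1) - 4) (exFup (d - 1) - 7) ∧
      max (d * g₁) (d * g₂) ≤ max (exFlo (d - 1) - 4) (exFup (d - 1) - 7)) :
    g₁ ≤ -1 ∧ g₂ ≤ 0 := by
  have h1 := (h 1 (by norm_num)).1
  have h2 := (h 2 (by norm_num)).2
  simp [exFlo, exFup, abs_of_nonneg] at h1 h2
  constructor
  · rcases h1.1 with h|h <;> linarith
  · rcases h2 with ⟨_,h⟩|⟨_,h⟩ <;> [linarith; (norm_num at h; linarith)]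
end
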